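/- Let G be a Polish group and Y a minimal G-flow. Then there exists a minimal G-flow X and a proximal extension φ: X → Y such that for every minimal G-flow Z and every proximal extension ψ: Z → Y, there exists a proximal extension π: X → Z with ψ ∘ π = φ. Moreover, X is unique up to isomorphism of G-flows. -/

import Mathlib

universe u v w x

/-- A `G`-flow: a nonempty compact Hausdorff space equipped with a continuous
action of the topological group `G` by homeomorphisms. -/
structure GFlow (G : Type u) [Group G] [TopologicalSpace G] [IsTopologicalGroup G] where
  /-- the underlying phase space -/
  X : Type v
  [instTopologicalSpace : TopologicalSpace X]
  [instCompactSpace : CompactSpace X]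
  [instT2Space : T2Space X]
  [instNonempty : Nonempty X]
  [instMulAction : MulAction G X]
  [instContinuousSMul : ContinuousSMul G X]

attribute [instance] GFlow.instTopologicalSpace GFlow.instCompactSpace GFlow.instT2Space
  GFlow.instNonempty GFlow.instMulAction GFlow.instContinuousSMul

variable {G : Type u} [Group G] [TopologicalSpace G] [IsTopologicalGroup G]

/-- A `G`-map between `G`-flows: a continuous `G`-equivariant map. -/
def IsGMap (F₁ : GFlow.{u, v} G) (F₂ : GFlow.{u, w} G) (f : F₁.X → F₂.X) : Prop :=
  Continuous f ∧ ∀ (g : G) (x : F₁.X), f (g • x) = g • f x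

/-- An extension of `G`-flows: a surjective `G`-map. -/
def IsExtension (F₁ : GFlow.{u, v} G) (F₂ : GFlow.{u, w} G) (f : F₁.X → F₂.X) : Prop :=
  IsGMap F₁ F₂ f ∧ Function.Surjective f

/-- A subflow: a nonempty closed `G`-invariant subset. -/
def IsSubflow (F : GFlow.{u, v} G) (C : Set F.X) : Prop :=
  C.Nonempty ∧ IsClosed C ∧ ∀ g : G, ∀ x ∈ C, g • x ∈ C

/-- A `G`-flow is minimal if it has no proper subflows. -/
def GFlow.IsMinimal (F : GFlow.{u, v} G) : Prop :=
  ∀ C : Set F.X, IsSubflow F C → C = Set.univ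

/-- A `G`-flow `F` is `G`-projective if for all `G`-flows `Y`, `Z`, every `G`-map
`φ : F → Y` and every extension `π : Z → Y`, there is a `G`-map `ψ : F → Z`
with `π ∘ ψ = φ`. -/
def IsGProjective (F : GFlow.{u, v} G) : Prop :=
  ∀ (Y : GFlow.{u, w} G) (Z : GFlow.{u, x} G) (φ : F.X → Y.X) (π : Z.X → Y.X),
    IsGMap F Y φ → IsExtension Z Y π →
    ∃ ψ : F.X → Z.X, IsGMap F Z ψ ∧ π ∘ ψ = φ

/-- An extension `φ : X → Y` of `G`-flows is proximal if every pair in a common fiber is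
proximal: the closure of its `G`-orbit in `X × X` meets the diagonal. -/
def IsProximalExt {G : Type u} [Group G] [TopologicalSpace G] [IsTopologicalGroup G]
    (F₁ : GFlow.{u, v} G) (F₂ : GFlow.{u, w} G) (φ : F₁.X → F₂.X) : Prop :=
  IsExtension F₁ F₂ φ ∧
    ∀ x y : F₁.X, φ x = φ y →
      ∃ z : F₁.X, (z, z) ∈ closure {p : F₁.X × F₁.X | ∃ g : G, p = (g • x, g • y)}

/-!
A minimal flow embeds into `Set (Set G)` via `z ↦ {A | z ∈ closure (A • z₀)}`, so up to
isomorphism the minimal proximal extensions of `Y` form a set. Let `X` be a minimal subflow of the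
fibre product over `Y` of all of them. Two points of a common fibre of `X → Y` have an orbit
closure in `X × X` containing a minimal subflow; on each coordinate a pair `c` of this subflow is
proximal and lies in a minimal subflow of the square, hence is diagonal. So `c` is diagonal and
`X → Y` is proximal, while the coordinate projections give the universal property. For uniqueness,
the composite `X → X' → X` of the two factorisations sends each point to a proximal one, hence is
the identity by the same diagonal argument.
-/

open Set Function

def IsMinimalSubflow (F : GFlow.{u, v} G) (M : Set F.X) : Prop :=
  IsSubflow F M ∧ ∀ D, IsSubflow F D → D ⊆ M → D = M

namespace GFlow

def Proximal (F : GFlow.{u, v} G) (x y : F.X) : Prop :=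
  ∃ z : F.X, (z, z) ∈ closure {p : F.X × F.X | ∃ g : G, p = (g • x, g • y)}

abbrev prod (F₁ : GFlow.{u, v} G) (F₂ : GFlow.{u, w} G) : GFlow.{u, max v w} G :=
  ⟨F₁.X × F₂.X⟩

def subflow (F : GFlow.{u, v} G) {M : Set F.X} (hM : IsSubflow F M) : GFlow.{u, v} G :=
  letI : CompactSpace M := isCompact_iff_compactSpace.mp hM.2.1.isCompact
  letI : Nonempty M := hM.1.to_subtype
  ⟨(⟨M, fun g _ hx => hM.2.2 g _ hx⟩ : SubMulAction G F.X)⟩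

end GFlow

lemma isGMap_id (F : GFlow.{u, v} G) : IsGMap F F id :=
  ⟨continuous_id, fun _ _ => rfl⟩

lemma IsGMap.comp {F₁ : GFlow.{u, v} G} {F₂ : GFlow.{u, w} G} {F₃ : GFlow.{u, x} G}
    {f : F₁.X → F₂.X} {f' : F₂.X → F₃.X} (hf' : IsGMap F₂ F₃ f') (hf : IsGMap F₁ F₂ f) :
    IsGMap F₁ F₃ (f' ∘ f) :=
  ⟨hf'.1.comp hf.1, fun g x => by simp only [comp_apply, hf.2, hf'.2]⟩

lemma IsGMap.prodMk {F : GFlow.{u, v} G} {F₁ : GFlow.{u, w} G} {F₂ : GFlow.{u, x} G}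
    {f₁ : F.X → F₁.X} {f₂ : F.X → F₂.X} (hf₁ : IsGMap F F₁ f₁) (hf₂ : IsGMap F F₂ f₂) :
    IsGMap F (F₁.prod F₂) fun x => (f₁ x, f₂ x) :=
  ⟨hf₁.1.prodMk hf₂.1, fun g x => by simp only [hf₁.2, hf₂.2]; rfl⟩

lemma IsGMap.prodMap {F₁ : GFlow.{u, v} G} {F₂ : GFlow.{u, w} G} {f : F₁.X → F₂.X}
    (hf : IsGMap F₁ F₂ f) : IsGMap (F₁.prod F₁) (F₂.prod F₂) (Prod.map f f) :=
  ⟨hf.1.prodMap hf.1, fun g q => Prod.ext (hf.2 g q.1) (hf.2 g q.2)⟩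

lemma isGMap_subtype_val (F : GFlow.{u, v} G) {M : Set F.X} (hM : IsSubflow F M) :
    IsGMap (F.subflow hM) F Subtype.val :=
  ⟨continuous_subtype_val, fun _ _ => rfl⟩

section Subflows

variable {F : GFlow.{u, v} G}

lemma isSubflow_univ (F : GFlow.{u, v} G) : IsSubflow F univ :=
  ⟨univ_nonempty, isClosed_univ, fun _ _ _ => trivial⟩

lemma isSubflow_closure_range_smul (x : F.X) :
    IsSubflow F (closure (range fun g : G => g • x)) := by
  refine ⟨⟨x, subset_closure ⟨1, one_smul G x⟩⟩, isClosed_closure, fun g y hy => ?_⟩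
  have hmaps : MapsTo (g • ·) (range fun h : G => h • x) (range fun h : G => h • x) := by
    rintro _ ⟨h, rfl⟩
    exact ⟨g * h, mul_smul g h x⟩
  exact map_mem_closure (continuous_const_smul g) hy hmaps

lemma IsSubflow.closure_range_smul_subset {C : Set F.X} (hC : IsSubflow F C) {x : F.X}
    (hx : x ∈ C) : closure (range fun g : G => g • x) ⊆ C :=
  closure_minimal (range_subset_iff.2 fun g => hC.2.2 g x hx) hC.2.1

lemma IsSubflow.image {F₂ : GFlow.{u, w} G} {f : F.X → F₂.X} {C : Set F.X}
    (hC : IsSubflow F C) (hf : IsGMap F F₂ f) : IsSubflow F₂ (f '' C) :=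
  ⟨hC.1.image f, (hC.2.1.isCompact.image hf.1).isClosed, by
    rintro g _ ⟨x, hx, rfl⟩
    exact ⟨g • x, hC.2.2 g x hx, hf.2 g x⟩⟩

lemma IsSubflow.exists_isMinimalSubflow_subset {C : Set F.X} (hC : IsSubflow F C) :
    ∃ M ⊆ C, IsMinimalSubflow F M := by
  have hchain : ∀ c ⊆ {D | IsSubflow F D}, IsChain (· ⊆ ·) c → c.Nonempty →
      ∃ lb ∈ {D | IsSubflow F D}, ∀ s ∈ c, lb ⊆ s := by
    intro c hc hchain hne
    have := hne.to_subtype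
    refine ⟨⋂₀ c, ⟨?_, isClosed_sInter fun D hD => (hc hD).2.1, ?_⟩,
      fun D hD => sInter_subset_of_mem hD⟩
    · refine IsCompact.nonempty_sInter_of_directed_nonempty_isCompact_isClosed ?_
        (fun D hD => (hc hD).1) (fun D hD => (hc hD).2.1.isCompact) (fun D hD => (hc hD).2.1)
      exact fun A hA B hB => (hchain.total hA hB).elim (fun h => ⟨A, hA, subset_rfl, h⟩)
        fun h => ⟨B, hB, h, subset_rfl⟩
    · exact fun g y hy => mem_sInter.2 fun D hD => (hc hD).2.2 g y (mem_sInter.1 hy D hD)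
  obtain ⟨M, hMC, hM⟩ := zorn_superset_nonempty {D | IsSubflow F D} hchain C hC
  exact ⟨M, hMC, hM.prop, fun D hD hDM => hDM.antisymm (hM.2 hD hDM)⟩

lemma GFlow.IsMinimal.isMinimalSubflow_univ (hF : F.IsMinimal) : IsMinimalSubflow F univ :=
  ⟨isSubflow_univ F, fun D hD _ => hF D hD⟩

lemma IsMinimalSubflow.subset_of_inter_nonempty {M C : Set F.X} (hM : IsMinimalSubflow F M)
    (hC : IsClosed C) (hCinv : ∀ g : G, ∀ x ∈ C, g • x ∈ C) (hne : (M ∩ C).Nonempty) :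
    M ⊆ C := by
  have hMC : M ∩ C = M := hM.2 _
    ⟨hne, hM.1.2.1.inter hC, fun g x hx => ⟨hM.1.2.2 g x hx.1, hCinv g x hx.2⟩⟩
    inter_subset_left
  exact hMC.symm.subset.trans inter_subset_right

lemma IsMinimalSubflow.image {F₂ : GFlow.{u, w} G} {f : F.X → F₂.X} {M : Set F.X}
    (hM : IsMinimalSubflow F M) (hf : IsGMap F F₂ f) : IsMinimalSubflow F₂ (f '' M) := by
  refine ⟨hM.1.image hf, fun D hD hDM => hDM.antisymm ?_⟩
  obtain ⟨_, hyD⟩ := hD.1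
  obtain ⟨x, hx, rfl⟩ := hDM hyD
  refine image_subset_iff.2 (hM.subset_of_inter_nonempty (hD.2.1.preimage hf.1) ?_ ⟨x, hx, hyD⟩)
  intro g y hy
  simpa only [mem_preimage, hf.2] using hD.2.2 g _ hy

lemma IsMinimalSubflow.isMinimal_subflow {M : Set F.X} (hM : IsMinimalSubflow F M) :
    (F.subflow hM.1).IsMinimal := by
  intro C hC
  have hCM : Subtype.val '' C = M :=
    hM.2 _ (hC.image (isGMap_subtype_val F hM.1)) (image_subset_iff.2 fun x _ => x.2)
  refine eq_univ_of_forall fun x => ?_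
  obtain ⟨y, hy, hyx⟩ : x.1 ∈ Subtype.val '' C := by rw [hCM]; exact x.2
  exact Subtype.ext hyx ▸ hy

lemma IsGMap.surjective_of_isMinimal {F₂ : GFlow.{u, w} G} {f : F.X → F₂.X}
    (hf : IsGMap F F₂ f) (hF₂ : F₂.IsMinimal) : Surjective f := by
  rw [← range_eq_univ, ← image_univ]
  exact hF₂ _ ((isSubflow_univ F).image hf)

end Subflows

section Proximal

variable {F : GFlow.{u, v} G}

lemma GFlow.setOf_pair_smul_eq_range (x y : F.X) :
    {p : F.X × F.X | ∃ g : G, p = (g • x, g • y)} =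
      range fun g : G => g • ((x, y) : (F.prod F).X) := by
  ext p
  exact ⟨fun ⟨g, hg⟩ => ⟨g, hg.symm⟩, fun ⟨g, hg⟩ => ⟨g, hg.symm⟩⟩

lemma GFlow.Proximal.map {F₂ : GFlow.{u, w} G} {f : F.X → F₂.X} (hf : IsGMap F F₂ f)
    {x y : F.X} (h : F.Proximal x y) : F₂.Proximal (f x) (f y) := by
  obtain ⟨z, hz⟩ := h
  refine ⟨f z, map_mem_closure (f := Prod.map f f) (hf.1.prodMap hf.1) hz ?_⟩
  rintro _ ⟨g, rfl⟩
  exact ⟨g, by simp only [Prod.map, hf.2]⟩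

lemma IsMinimalSubflow.eq_of_proximal {M : Set (F.prod F).X}
    (hM : IsMinimalSubflow (F.prod F) M) {c : (F.prod F).X} (hc : c ∈ M)
    (h : F.Proximal c.1 c.2) : c.1 = c.2 := by
  obtain ⟨z, hz⟩ := h
  have hzM : ((z, z) : (F.prod F).X) ∈ M := by
    rw [F.setOf_pair_smul_eq_range, Prod.mk.eta] at hz
    exact hM.1.closure_range_smul_subset hc hz
  have hdiag : IsClosed {p : (F.prod F).X | p.1 = p.2} := isClosed_eq continuous_fst continuous_snd
  exact hM.subset_of_inter_nonempty hdiag (fun g p hp => congrArg (g • ·) hp) ⟨_, hzM, rfl⟩ hc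

lemma IsGMap.eq_self_of_proximal {ρ : F.X → F.X} (hρ : IsGMap F F ρ) (hF : F.IsMinimal)
    (h : ∀ x, F.Proximal x (ρ x)) (x : F.X) : ρ x = x :=
  ((hF.isMinimalSubflow_univ.image ((isGMap_id F).prodMk hρ)).eq_of_proximal
    ⟨x, trivial, rfl⟩ (h x)).symm

lemma IsGMap.proximal_of_eq_on_isMinimalSubflow {Y : GFlow.{u, w} G} {φ : F.X → Y.X}
    (hφ : IsGMap F Y φ)
    (h : ∀ M, IsMinimalSubflow (F.prod F) M → ∀ c ∈ M, φ c.1 = φ c.2 → c.1 = c.2)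
    {x y : F.X} (hxy : φ x = φ y) : F.Proximal x y := by
  have hN := isSubflow_closure_range_smul (F := F.prod F) ((x, y) : (F.prod F).X)
  have hNφ : closure (range fun g : G => g • ((x, y) : (F.prod F).X)) ⊆
      {c | φ c.1 = φ c.2} := by
    refine closure_minimal ?_ (isClosed_eq (hφ.1.comp continuous_fst) (hφ.1.comp continuous_snd))
    rintro _ ⟨g, rfl⟩
    exact (hφ.2 g x).trans ((congrArg (g • ·) hxy).trans (hφ.2 g y).symm)
  obtain ⟨M, hMN, hM⟩ := hN.exists_isMinimalSubflow_subset
  obtain ⟨c, hc⟩ := hM.1.1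
  have hc_diag : (c.1, c.1) = c := Prod.ext rfl (h M hM c hc (hNφ (hMN hc)))
  refine ⟨c.1, ?_⟩
  rw [F.setOf_pair_smul_eq_range, hc_diag]
  exact hMN hc

lemma IsProximalExt.of_comp {X : GFlow.{u, v} G} {Y : GFlow.{u, w} G} {Z : GFlow.{u, x} G}
    {π : X.X → Z.X} {ψ : Z.X → Y.X} (h : IsProximalExt X Y (ψ ∘ π)) (hπ : IsGMap X Z π)
    (hZ : Z.IsMinimal) : IsProximalExt X Z π :=
  ⟨⟨hπ, hπ.surjective_of_isMinimal hZ⟩, fun x y hxy => h.2 x y (congrArg ψ hxy)⟩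

lemma IsProximalExt.comp_equiv_symm {Z : GFlow.{u, v} G} {Z' : GFlow.{u, w} G}
    {Y : GFlow.{u, x} G} {ψ : Z.X → Y.X} (hψ : IsProximalExt Z Y ψ) (e : Z.X ≃ Z'.X)
    (he : IsGMap Z Z' e) (he' : IsGMap Z' Z e.symm) : IsProximalExt Z' Y (ψ ∘ e.symm) :=
  ⟨⟨hψ.1.1.comp he', hψ.1.2.comp e.symm.surjective⟩, fun x y hxy => by
    have hxy' := GFlow.Proximal.map he (hψ.2 _ _ hxy)
    rwa [e.apply_symm_apply, e.apply_symm_apply] at hxy'⟩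

lemma IsProximalExt.injective_of_comp_eq {X : GFlow.{u, v} G} {X' : GFlow.{u, w} G}
    {Y : GFlow.{u, x} G} {φ : X.X → Y.X} {π : X.X → X'.X} {π' : X'.X → X.X}
    (hφ : IsProximalExt X Y φ) (hX : X.IsMinimal) (hπ : IsGMap X X' π)
    (hπ' : IsGMap X' X π') (h : ∀ x, φ (π' (π x)) = φ x) : Injective π :=
  LeftInverse.injective <| (hπ'.comp hπ).eq_self_of_proximal hX fun x => hφ.2 _ _ (h x).symm

end Proximal

namespace GFlow

def orbitCode (F : GFlow.{u, v} G) (z₀ z : F.X) : Set (Set (ULift.{w} G)) :=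
  {A | z ∈ closure ((fun a : ULift.{w} G => a.down • z₀) '' A)}

lemma orbitCode_injective (F : GFlow.{u, v} G) {z₀ : F.X}
    (hz₀ : Dense (range fun g : G => g • z₀)) : Injective (F.orbitCode.{u, v, w} z₀) := by
  intro z z' hzz'
  by_contra hne
  obtain ⟨t, ht, htc, htz'⟩ :=
    exists_mem_nhds_isClosed_subset (isOpen_compl_singleton.mem_nhds hne)
  let A : Set (ULift.{w} G) := {a | a.down • z₀ ∈ interior t}
  have hz : A ∈ F.orbitCode z₀ z := by
    refine closure_mono ?_ (hz₀.open_subset_closure_inter isOpen_interior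
      (mem_interior_iff_mem_nhds.2 ht))
    rintro _ ⟨hx, g, rfl⟩
    exact ⟨⟨g⟩, hx, rfl⟩
  have hz' : A ∉ F.orbitCode z₀ z' := by
    refine fun hA => htz' (htc.closure_subset_iff.2 ?_ hA) rfl
    rintro _ ⟨a, ha, rfl⟩
    exact interior_subset ha
  exact hz' (hzz' ▸ hz)

end GFlow

/-- Unlike `GFlow`, these form a type in the universe of `T`, so they can index a product of
flows. -/
structure GFlowOn (G : Type u) [Group G] [TopologicalSpace G] [IsTopologicalGroup G]
    (T : Type w) where
  carrier : Set T
  [instTopologicalSpace : TopologicalSpace carrier]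
  [instCompactSpace : CompactSpace carrier]
  [instT2Space : T2Space carrier]
  [instNonempty : Nonempty carrier]
  [instMulAction : MulAction G carrier]
  [instContinuousSMul : ContinuousSMul G carrier]

attribute [instance] GFlowOn.instTopologicalSpace GFlowOn.instCompactSpace GFlowOn.instT2Space
  GFlowOn.instNonempty GFlowOn.instMulAction GFlowOn.instContinuousSMul

def GFlowOn.toGFlow {T : Type w} (F : GFlowOn G T) : GFlow.{u, w} G :=
  ⟨F.carrier⟩

lemma GFlow.exists_gFlowOn_equiv (F : GFlow.{u, v} G) {T : Type w} {ι : F.X → T}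
    (hι : Injective ι) : ∃ (F' : GFlowOn G T) (e : F.X ≃ F'.toGFlow.X),
      IsGMap F F'.toGFlow e ∧ IsGMap F'.toGFlow F e.symm := by
  let e₀ : range ι ≃ F.X := (Equiv.ofInjective ι hι).symm
  let _ : TopologicalSpace (range ι) := .induced e₀ inferInstance
  let _ : MulAction G (range ι) := e₀.mulAction G
  let e : range ι ≃ₜ F.X := e₀.toHomeomorphOfIsInducing ⟨rfl⟩
  have he : ∀ (g : G) (s : range ι), e (g • s) = g • e s := fun _ _ => e₀.apply_symm_apply _
  have : ContinuousSMul G (range ι) := e.isInducing.continuousSMul continuous_id (he _ _)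
  have := e.symm.compactSpace
  have := e.isEmbedding.t2Space
  have : Nonempty (range ι) := ⟨e.symm (Classical.arbitrary F.X)⟩
  refine ⟨⟨range ι⟩, e₀.symm, ⟨e.symm.continuous, fun g x => ?_⟩, ⟨e.continuous, he⟩⟩
  show e₀.symm (g • x) = e₀.symm (g • e₀ (e₀.symm x))
  rw [e₀.apply_symm_apply]

namespace MaximalProximalExt

variable (Y : GFlow.{u, v} G)

/-- Proximal extensions of `Y` whose points are codes as in `GFlow.orbitCode`: every minimal
one is isomorphic over `Y` to one of these. -/
def Index : Type (max u v) :=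
  {p : (F : GFlowOn G (Set (Set (ULift.{v} G)))) × (F.toGFlow.X → Y.X) //
    IsProximalExt p.1.toGFlow Y p.2}

variable {Y}

abbrev Index.flow (j : Index Y) : GFlow.{u, max u v} G := j.1.1.toGFlow

def Index.map (j : Index Y) : j.flow.X → Y.X := j.1.2

lemma Index.isProximalExt (j : Index Y) : IsProximalExt j.flow Y j.map := j.2

variable (Y)

abbrev fiberProduct : GFlow.{u, max u v} G :=
  ⟨Y.X × ∀ j : Index Y, j.flow.X⟩

def fiberSet : Set (fiberProduct Y).X :=
  {p | ∀ j : Index Y, j.map (p.2 j) = p.1}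

lemma isSubflow_fiberSet : IsSubflow (fiberProduct Y) (fiberSet Y) := by
  refine ⟨?_, ?_, ?_⟩
  · let y := Classical.arbitrary Y.X
    exact ⟨(y, fun j => surjInv j.isProximalExt.1.2 y), fun j => surjInv_eq _ y⟩
  · rw [fiberSet, ofPred_forall]
    refine isClosed_iInter fun j => isClosed_eq ?_ continuous_fst
    exact j.isProximalExt.1.1.1.comp ((continuous_apply j).comp continuous_snd)
  · intro g p hp j
    exact (j.isProximalExt.1.1.2 g (p.2 j)).trans (congrArg (g • ·) (hp j))

lemma isGMap_fst : IsGMap (fiberProduct Y) Y Prod.fst :=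
  ⟨continuous_fst, fun _ _ => rfl⟩

lemma isGMap_apply (j : Index Y) : IsGMap (fiberProduct Y) j.flow fun p => p.2 j :=
  ⟨(continuous_apply j).comp continuous_snd, fun _ _ => rfl⟩

variable {Y} {M : Set (fiberProduct Y).X}

lemma isProximalExt_fst (hY : Y.IsMinimal) (hM : IsMinimalSubflow (fiberProduct Y) M)
    (hMF : M ⊆ fiberSet Y) :
    IsProximalExt ((fiberProduct Y).subflow hM.1) Y (Prod.fst ∘ Subtype.val) := by
  have hφ := (isGMap_fst Y).comp (isGMap_subtype_val _ hM.1)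
  refine ⟨⟨hφ, hφ.surjective_of_isMinimal hY⟩, fun x y hxy =>
    hφ.proximal_of_eq_on_isMinimalSubflow ?_ hxy⟩
  intro N hN c hc hcφ
  refine Subtype.ext (Prod.ext hcφ (funext fun j => ?_))
  have hπ := ((isGMap_apply Y j).comp (isGMap_subtype_val _ hM.1)).prodMap
  refine (hN.image hπ).eq_of_proximal (c := (c.1.1.2 j, c.2.1.2 j)) ⟨c, hc, rfl⟩ ?_
  exact j.isProximalExt.2 _ _ ((hMF c.1.2 j).trans (hcφ.trans (hMF c.2.2 j).symm))

lemma exists_factor (hY : Y.IsMinimal) (hM : IsMinimalSubflow (fiberProduct Y) M)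
    (hMF : M ⊆ fiberSet Y) {Z : GFlow.{u, w} G} {ψ : Z.X → Y.X} (hZ : Z.IsMinimal)
    (hψ : IsProximalExt Z Y ψ) :
    ∃ π, IsProximalExt ((fiberProduct Y).subflow hM.1) Z π ∧
      ψ ∘ π = Prod.fst ∘ Subtype.val := by
  obtain ⟨z₀⟩ := Z.instNonempty
  have hz₀ : Dense (range fun g : G => g • z₀) :=
    dense_iff_closure_eq.2 (hZ _ (isSubflow_closure_range_smul z₀))
  obtain ⟨F, e, he, he'⟩ := Z.exists_gFlowOn_equiv (Z.orbitCode_injective.{u, w, v} hz₀)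
  let j : Index Y := ⟨⟨F, ψ ∘ e.symm⟩, hψ.comp_equiv_symm e he he'⟩
  have hπ := he'.comp ((isGMap_apply Y j).comp (isGMap_subtype_val _ hM.1))
  have hcomm : ψ ∘ (e.symm ∘ (fun p : (fiberProduct Y).X => p.2 j) ∘ Subtype.val) =
      Prod.fst ∘ Subtype.val :=
    funext fun x => hMF x.2 j
  exact ⟨_, (hcomm ▸ isProximalExt_fst hY hM hMF).of_comp hπ hZ, hcomm⟩

end MaximalProximalExt

open MaximalProximalExt

theorem statement19_general {G : Type u} [Group G] [TopologicalSpace G] [IsTopologicalGroup G]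
    (Y : GFlow.{u, v} G) (hY : Y.IsMinimal) :
    ∃ (X : GFlow.{u, max u v} G) (φ : X.X → Y.X),
      X.IsMinimal ∧ IsProximalExt X Y φ ∧
      (∀ (Z : GFlow.{u, max u v} G) (ψ : Z.X → Y.X), Z.IsMinimal →
        IsProximalExt Z Y ψ →
        ∃ π : X.X → Z.X, IsProximalExt X Z π ∧ ψ ∘ π = φ) ∧
      ∀ (X' : GFlow.{u, max u v} G) (φ' : X'.X → Y.X), X'.IsMinimal →
        IsProximalExt X' Y φ' →
        (∀ (Z : GFlow.{u, max u v} G) (ψ : Z.X → Y.X), Z.IsMinimal →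
          IsProximalExt Z Y ψ →
          ∃ π : X'.X → Z.X, IsProximalExt X' Z π ∧ ψ ∘ π = φ') →
        ∃ e : X.X → X'.X, IsGMap X X' e ∧ Function.Bijective e := by
  obtain ⟨M, hMF, hM⟩ := (isSubflow_fiberSet Y).exists_isMinimalSubflow_subset
  have hX := hM.isMinimal_subflow
  have hφ := isProximalExt_fst hY hM hMF
  refine ⟨_, _, hX, hφ, fun Z ψ hZ hψ => exists_factor hY hM hMF hZ hψ, ?_⟩
  intro X' φ' hX' hφ' huniv'
  obtain ⟨π, hπ, hπφ⟩ := exists_factor hY hM hMF hX' hφ'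
  obtain ⟨π', hπ', hπ'φ'⟩ := huniv' _ _ hX hφ
  refine ⟨π, hπ.1.1, hφ.injective_of_comp_eq hX hπ.1.1 hπ'.1.1 fun x => ?_, hπ.1.2⟩
  exact (congrFun hπ'φ' (π x)).trans (congrFun hπφ x)

/-- **Statement 19.** Every minimal flow of a Polish group admits a maximal proximal
extension, unique up to isomorphism. -/
theorem statement19 {G : Type u} [Group G] [TopologicalSpace G] [IsTopologicalGroup G]
    [PolishSpace G] (Y : GFlow.{u, v} G) (hY : Y.IsMinimal) :
    ∃ (X : GFlow.{u, max u v} G) (φ : X.X → Y.X),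
      X.IsMinimal ∧ IsProximalExt X Y φ ∧
      (∀ (Z : GFlow.{u, max u v} G) (ψ : Z.X → Y.X), Z.IsMinimal →
        IsProximalExt Z Y ψ →
        ∃ π : X.X → Z.X, IsProximalExt X Z π ∧ ψ ∘ π = φ) ∧
      ∀ (X' : GFlow.{u, max u v} G) (φ' : X'.X → Y.X), X'.IsMinimal →
        IsProximalExt X' Y φ' →
        (∀ (Z : GFlow.{u, max u v} G) (ψ : Z.X → Y.X), Z.IsMinimal →
          IsProximalExt Z Y ψ →
          ∃ π : X'.X → Z.X, IsProximalExt X' Z π ∧ ψ ∘ π = φ') →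
        ∃ e : X.X → X'.X, IsGMap X X' e ∧ Function.Bijective e :=
  statement19_general Y hY
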